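/- arXiv:1805.07275 — 3 statements merged into one kernel-verified Lean document; each statement's English description precedes it below -/
import Mathlib

section
/- If f(t) = a + ∫_{(0,∞)} e^{-st} μ(ds) with a ≥ 0 and μ a Borel measure on (0,∞) satisfying ∫ (1+s)^{-1} μ(ds) < ∞, then the Laplace transform of f exists for every p > 0 and equals a/p + ∫_{(0,∞)} (s+p)^{-1} μ(ds). -/
open MeasureTheory Filter Set
open scoped ENNReal

section aux
variable {s t p c : ℝ} (μ : Measure ℝ)

lemma aux_int_exp (hc : 0 < c) : ∫ t in Ioi (0:ℝ), Real.exp (-c * t) = c⁻¹ := by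
  have h := integral_comp_mul_left_Ioi (fun x => Real.exp (-x)) 0 hc
  simp only [mul_zero, integral_exp_neg_Ioi, neg_zero, Real.exp_zero, smul_eq_mul, mul_one] at h
  simpa [neg_mul] using h

lemma aux_lint_exp (hc : 0 < c) :
    ∫⁻ t in Ioi (0:ℝ), ENNReal.ofReal (Real.exp (-c * t)) = ENNReal.ofReal c⁻¹ := by
  rw [← ofReal_integral_eq_lintegral_ofReal (exp_neg_integrableOn_Ioi 0 hc)
    (ae_of_all _ fun t => (Real.exp_pos _).le), aux_int_exp hc]

lemma aux_exp_bound (hs : 0 < s) (ht : 0 < t) :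
    Real.exp (-s * t) ≤ (1 + t⁻¹) * (1 + s)⁻¹ := by
  have h1 : Real.exp (-s * t) ≤ 1 := Real.exp_le_one_iff.mpr (by nlinarith)
  have h2 : s * Real.exp (-s * t) ≤ t⁻¹ := by
    rw [neg_mul, Real.exp_neg]
    have hst : s * t ≤ Real.exp (s * t) := by nlinarith [Real.add_one_le_exp (s*t)]
    have hinv : (Real.exp (s*t))⁻¹ ≤ (s*t)⁻¹ := inv_anti₀ (mul_pos hs ht) hst
    calc s * (Real.exp (s*t))⁻¹ ≤ s * (s*t)⁻¹ := mul_le_mul_of_nonneg_left hinv hs.le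
      _ = t⁻¹ := by field_simp
  have h3 : (0:ℝ) < 1 + s := by linarith
  rw [show (1+t⁻¹)*(1+s)⁻¹ = (1+t⁻¹)/(1+s) from (div_eq_mul_inv _ _).symm, le_div_iff₀ h3]
  nlinarith

lemma aux_inv_bound (hs : 0 < s) (hp : 0 < p) :
    (s + p)⁻¹ ≤ (1 + p⁻¹) * (1 + s)⁻¹ := by
  have h1 : (0:ℝ) < s + p := by linarith
  have h2 : (0:ℝ) < 1 + s := by linarith
  rw [mul_comm, ← div_eq_inv_mul, le_div_iff₀ h2, inv_mul_eq_div, div_le_iff₀ h1]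
  have := mul_inv_cancel₀ hp.ne'
  nlinarith [mul_pos hs (inv_pos.mpr hp)]

lemma aux_sigmaFinite
    (hμ : (∫⁻ s in Ioi (0 : ℝ), ENNReal.ofReal (1 + s)⁻¹ ∂μ) < ⊤) :
    SigmaFinite (μ.restrict (Ioi 0)) := by
  constructor
  refine ⟨⟨fun n => Iic (n:ℝ), fun _ => trivial, fun n => ?_, ?_⟩⟩
  · rw [Measure.restrict_apply measurableSet_Iic]
    have hsub : Iic (n:ℝ) ∩ Ioi 0 = Ioc 0 (n:ℝ) := by ext x; simp [and_comm]
    rw [hsub]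
    have hcn : (0:ℝ) < 1 + n := by positivity
    have hb : ENNReal.ofReal ((1+(n:ℝ))⁻¹) * μ (Ioc 0 (n:ℝ)) ≤
        ∫⁻ s in Ioi (0:ℝ), ENNReal.ofReal (1 + s)⁻¹ ∂μ := by
      calc ENNReal.ofReal ((1+(n:ℝ))⁻¹) * μ (Ioc 0 (n:ℝ))
          = ∫⁻ _ in Ioc (0:ℝ) (n:ℝ), ENNReal.ofReal ((1+(n:ℝ))⁻¹) ∂μ := by
            rw [setLIntegral_const]
        _ ≤ ∫⁻ s in Ioc (0:ℝ) (n:ℝ), ENNReal.ofReal (1 + s)⁻¹ ∂μ := by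
            refine setLIntegral_mono
              (ENNReal.measurable_ofReal.comp ((measurable_const.add measurable_id).inv))
              fun s hs => ?_
            exact ENNReal.ofReal_le_ofReal (inv_anti₀ (by linarith [hs.1]) (by linarith [hs.2]))
        _ ≤ ∫⁻ s in Ioi (0:ℝ), ENNReal.ofReal (1 + s)⁻¹ ∂μ :=
            lintegral_mono_set Ioc_subset_Ioi_self
    by_contra h
    push_neg at h
    rw [top_le_iff.mp h, ENNReal.mul_top (by simp [ENNReal.ofReal_eq_zero]; positivity)] at hb
    exact absurd (lt_of_le_of_lt hb hμ) (by simp)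
  · rw [iUnion_eq_univ_iff]
    exact fun x => (exists_nat_ge x).imp fun n hn => mem_Iic.mpr hn

end aux



/-- The Laplace transform of `f`. -/
noncomputable def laplace (f : ℝ → ℝ) (p : ℝ) : ℝ :=
  ∫ t in Ioi (0 : ℝ), Real.exp (-p * t) * f t

/-- `f` is completely monotone on `(0,∞)`. -/
def CompletelyMonotone (f : ℝ → ℝ) : Prop :=
  ContDiffOn ℝ (⊤ : ℕ∞) f (Ioi 0) ∧
    ∀ (n : ℕ) (t : ℝ), 0 < t → 0 ≤ (-1 : ℝ) ^ n * iteratedDerivWithin n f (Ioi 0) t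

/-- `f` is locally integrable completely monotone. -/
def LICM (f : ℝ → ℝ) : Prop :=
  CompletelyMonotone f ∧ IntegrableOn f (Ioo 0 1)

theorem laplace_of_LICM_representation (f : ℝ → ℝ) (a : ℝ) (μ : Measure ℝ)
    (ha : 0 ≤ a)
    (hμ : (∫⁻ s in Ioi (0 : ℝ), ENNReal.ofReal (1 + s)⁻¹ ∂μ) < ⊤)
    (hf : ∀ t > 0, f t = a + ∫ s in Ioi (0 : ℝ), Real.exp (-s * t) ∂μ) :
    ∀ p > 0, IntegrableOn (fun t => Real.exp (-p * t) * f t) (Ioi 0) ∧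
      laplace f p = a / p + ∫ s in Ioi (0 : ℝ), (s + p)⁻¹ ∂μ := by
  simp only [laplace]
  intro p hp
  set ν := μ.restrict (Ioi (0:ℝ)) with hν
  haveI : SigmaFinite ν := aux_sigmaFinite μ hμ
  -- finiteness of the target lintegral
  set J : ℝ≥0∞ := ∫⁻ s, ENNReal.ofReal ((s + p)⁻¹) ∂ν with hJ
  have hmeas_inv : Measurable fun s : ℝ => ENNReal.ofReal ((s + p)⁻¹) :=
    ENNReal.measurable_ofReal.comp ((measurable_id.add measurable_const).inv)
  have hJfin : J < ⊤ := by
    have hb : J ≤ ENNReal.ofReal (1 + p⁻¹) * ∫⁻ s, ENNReal.ofReal ((1 + s)⁻¹) ∂ν := by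
      rw [← lintegral_const_mul' _ _ ENNReal.ofReal_ne_top]
      refine setLIntegral_mono' measurableSet_Ioi fun s hs => ?_
      rw [← ENNReal.ofReal_mul (by positivity)]
      exact ENNReal.ofReal_le_ofReal (aux_inv_bound hs hp)
    refine lt_of_le_of_lt hb (ENNReal.mul_lt_top ENNReal.ofReal_lt_top ?_)
    exact hμ
  -- per-t integrability of the kernel in s
  have hintA : ∀ t : ℝ, 0 < t → Integrable (fun s => Real.exp (-s * t)) ν := by
    intro t ht
    constructor
    · exact (Continuous.aestronglyMeasurable (by continuity))
    · rw [hasFiniteIntegral_iff_ofReal (ae_of_all _ fun s => (Real.exp_pos _).le)]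
      have hb : (∫⁻ s, ENNReal.ofReal (Real.exp (-s * t)) ∂ν) ≤
          ENNReal.ofReal (1 + t⁻¹) * ∫⁻ s, ENNReal.ofReal ((1 + s)⁻¹) ∂ν := by
        rw [← lintegral_const_mul' _ _ ENNReal.ofReal_ne_top]
        refine setLIntegral_mono' measurableSet_Ioi fun s hs => ?_
        rw [← ENNReal.ofReal_mul (by positivity)]
        exact ENNReal.ofReal_le_ofReal (aux_exp_bound hs ht)
      exact lt_of_le_of_lt hb (ENNReal.mul_lt_top ENNReal.ofReal_lt_top hμ)
  -- Tonelli
  have hKmeas : AEMeasurable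
      (Function.uncurry fun (t s : ℝ) => ENNReal.ofReal (Real.exp (-p*t) * Real.exp (-s*t)))
      ((volume.restrict (Ioi 0)).prod ν) := by
    refine Measurable.aemeasurable ?_
    refine ENNReal.measurable_ofReal.comp ?_
    exact (Continuous.measurable (by fun_prop))
  have tonelli : (∫⁻ t in Ioi (0:ℝ),
      ∫⁻ s, ENNReal.ofReal (Real.exp (-p*t) * Real.exp (-s*t)) ∂ν) = J := by
    rw [lintegral_lintegral_swap hKmeas]
    refine lintegral_congr_ae ((ae_restrict_iff' measurableSet_Ioi).mpr (ae_of_all _ ?_))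
    intro s hs
    have hsp : 0 < s + p := by have := mem_Ioi.mp hs; linarith
    have : ∀ t : ℝ, Real.exp (-p*t) * Real.exp (-s*t) = Real.exp (-(s+p)*t) := by
      intro t; rw [← Real.exp_add]; ring_nf
    simp_rw [this]
    exact aux_lint_exp hsp
  set F : ℝ → ℝ := fun t => ∫ s, Real.exp (-s * t) ∂ν with hFdef
  have hFnn : ∀ t, 0 ≤ F t := fun t => integral_nonneg fun s => (Real.exp_pos _).le
  have hFof : ∀ t : ℝ, 0 < t →
      ENNReal.ofReal (F t) = ∫⁻ s, ENNReal.ofReal (Real.exp (-s*t)) ∂ν := fun t ht =>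
    ofReal_integral_eq_lintegral_ofReal (hintA t ht) (ae_of_all _ fun s => (Real.exp_pos _).le)
  have hFmeas : StronglyMeasurable F := by
    have h : StronglyMeasurable (fun z : ℝ × ℝ => Real.exp (-z.2 * z.1)) :=
      Continuous.stronglyMeasurable (by fun_prop)
    exact h.integral_prod_right'
  have hmeas2 : AEStronglyMeasurable (fun t => Real.exp (-p*t) * F t)
      (volume.restrict (Ioi 0)) :=
    (((Real.continuous_exp.comp (continuous_const.mul continuous_id)).stronglyMeasurable).mul
      hFmeas).aestronglyMeasurable
  have hlint2 : (∫⁻ t in Ioi (0:ℝ), ENNReal.ofReal (Real.exp (-p*t) * F t)) = J := by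
    rw [← tonelli]
    refine lintegral_congr_ae ((ae_restrict_iff' measurableSet_Ioi).mpr
      (ae_of_all _ fun t ht => ?_))
    dsimp only
    rw [ENNReal.ofReal_mul (Real.exp_pos _).le, hFof t ht,
      ← lintegral_const_mul' _ _ ENNReal.ofReal_ne_top]
    congr 1; ext s; rw [ENNReal.ofReal_mul (Real.exp_pos _).le]
  have hint2 : Integrable (fun t => Real.exp (-p*t) * F t) (volume.restrict (Ioi 0)) := by
    refine ⟨hmeas2, ?_⟩
    rw [hasFiniteIntegral_iff_ofReal (ae_of_all _ fun t => mul_nonneg (Real.exp_pos _).le (hFnn t)),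
      hlint2]
    exact hJfin
  have hint1 : Integrable (fun t => Real.exp (-p*t) * a) (volume.restrict (Ioi 0)) :=
    (exp_neg_integrableOn_Ioi 0 hp).mul_const a
  have haeq : (fun t => Real.exp (-p*t) * f t) =ᵐ[volume.restrict (Ioi 0)]
      fun t => Real.exp (-p*t) * a + Real.exp (-p*t) * F t := by
    refine (ae_restrict_iff' measurableSet_Ioi).mpr (ae_of_all _ fun t ht => ?_)
    dsimp only
    rw [hf t (mem_Ioi.mp ht), mul_add]
  refine ⟨(hint1.add hint2).congr haeq.symm, ?_⟩
  rw [integral_congr_ae haeq, integral_add hint1 hint2]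
  congr 1
  · rw [integral_mul_const, aux_int_exp hp, div_eq_mul_inv, mul_comm]
  · rw [integral_eq_lintegral_of_nonneg_ae
      (ae_of_all _ fun t => mul_nonneg (Real.exp_pos _).le (hFnn t)) hmeas2, hlint2]
    rw [show (∫ s in Ioi (0:ℝ), (s+p)⁻¹ ∂μ) = J.toReal from ?_]
    · rw [hJ, integral_eq_lintegral_of_nonneg_ae ?_ ?_]
      · exact (ae_restrict_iff' measurableSet_Ioi).mpr
          (ae_of_all _ fun s hs => by have := mem_Ioi.mp hs; positivity)
      · exact ((measurable_id.add measurable_const).inv).aestronglyMeasurable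
end

section
/- Under the hypotheses of the scalar duality theorem (f₀ LICM not identically zero, β ≥ 0, and h a Bernstein function with 1/(β·p + p·f̃₀(p)) = p·h̃(p)): if β > 0 or f₀ is unbounded at 0, then h(0) = 0; if β = 0 and the limit f₀(0⁺) := lim_{t→0⁺} f₀(t) is finite, then h(0) = 1/f₀(0⁺). -/
open MeasureTheory Filter Set

lemma LICM.nonneg {f : ℝ → ℝ} (hf : LICM f) {t : ℝ} (ht : 0 < t) : 0 ≤ f t := by
  have := hf.1.2 0 t ht
  simpa using this

lemma LICM.continuousOn {f : ℝ → ℝ} (hf : LICM f) : ContinuousOn f (Ioi 0) :=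
  hf.1.1.continuousOn

lemma LICM.antitoneOn {f : ℝ → ℝ} (hf : LICM f) : AntitoneOn f (Ioi 0) := by
  apply antitoneOn_of_deriv_nonpos (convex_Ioi 0) hf.continuousOn
  · rw [interior_Ioi]
    exact hf.1.1.differentiableOn (by norm_num)
  · intro x hx
    rw [interior_Ioi] at hx
    have h1 := hf.1.2 1 x hx
    rw [iteratedDerivWithin_one] at h1
    rw [derivWithin_of_isOpen isOpen_Ioi hx] at h1
    simpa using h1

lemma tendsto_exp_neg_mul (p : ℝ) (hp : 0 < p) :
    Tendsto (fun t : ℝ => Real.exp (-p*t)) atTop (nhds 0) := by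
  have h0 : Tendsto (fun t : ℝ => p * t) atTop atTop := tendsto_id.const_mul_atTop hp
  exact (Real.tendsto_exp_neg_atTop_nhds_zero.comp h0).congr fun t => by
    simp [Function.comp, neg_mul]

lemma tendsto_mul_exp_neg_mul (p : ℝ) (hp : 0 < p) :
    Tendsto (fun t : ℝ => t * Real.exp (-p*t)) atTop (nhds 0) := by
  have h0 : Tendsto (fun t : ℝ => p * t) atTop atTop := tendsto_id.const_mul_atTop hp
  have h := (Real.tendsto_pow_mul_exp_neg_atTop_nhds_zero 1).comp h0
  have h2 := h.const_mul (1/p)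
  rw [mul_zero] at h2
  refine h2.congr fun t => ?_
  simp only [Function.comp_apply, pow_one]
  field_simp

lemma hasDerivAt_exp_neg_mul (p t : ℝ) (hp : 0 < p) :
    HasDerivAt (fun t => -(Real.exp (-p*t)/p)) (Real.exp (-p*t)) t := by
  have h1 : HasDerivAt (fun t : ℝ => -p*t) (-p) t := by simpa using (hasDerivAt_id t).const_mul (-p)
  have h2 := (h1.exp.div_const p).neg
  refine h2.congr_deriv ?_
  rw [mul_neg, neg_div, neg_neg, mul_div_assoc, div_self hp.ne', mul_one]

lemma integrableOn_exp_neg_mul (p a : ℝ) (hp : 0 < p) :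
    IntegrableOn (fun t => Real.exp (-p*t)) (Ioi a) := by
  simpa [neg_mul, mul_comm] using exp_neg_integrableOn_Ioi a hp

lemma integral_exp_neg_mul (p a : ℝ) (hp : 0 < p) :
    ∫ t in Ioi a, Real.exp (-p*t) = Real.exp (-p*a) / p := by
  have := integral_Ioi_of_hasDerivAt_of_tendsto' (a := a)
    (fun x _ => hasDerivAt_exp_neg_mul p x hp) (integrableOn_exp_neg_mul p a hp)
    (((tendsto_exp_neg_mul p hp).div_const p).neg.congr (fun t => rfl))
  rw [this]
  simp

lemma hasDerivAt_mul_exp_neg_mul (p t : ℝ) (hp : 0 < p) :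
    HasDerivAt (fun t => -((t/p + 1/p^2) * Real.exp (-p*t))) (t * Real.exp (-p*t)) t := by
  have h1 : HasDerivAt (fun t : ℝ => -p*t) (-p) t := by simpa using (hasDerivAt_id t).const_mul (-p)
  have h2 : HasDerivAt (fun t : ℝ => t/p + 1/p^2) (1/p) t := by
    have := ((hasDerivAt_id t).div_const p).add_const (1/p^2)
    simpa [one_div] using this
  have h3 := (h2.mul h1.exp).neg
  refine h3.congr_deriv ?_
  have hp' : p ≠ 0 := hp.ne'
  field_simp
  ring

lemma tendsto_aux2 (p : ℝ) (hp : 0 < p) :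
    Tendsto (fun t : ℝ => -((t/p + 1/p^2) * Real.exp (-p*t))) atTop (nhds 0) := by
  have h1 := ((tendsto_mul_exp_neg_mul p hp).div_const p).add
    (((tendsto_exp_neg_mul p hp)).const_mul (1/p^2))
  rw [zero_div, mul_zero, add_zero] at h1
  have := h1.neg
  rw [neg_zero] at this
  refine this.congr fun t => ?_
  ring

lemma integrableOn_mul_exp_neg_mul (p a : ℝ) (hp : 0 < p) (ha : 0 ≤ a) :
    IntegrableOn (fun t => t * Real.exp (-p*t)) (Ioi a) :=
  integrableOn_Ioi_deriv_of_nonneg' (fun x _ => hasDerivAt_mul_exp_neg_mul p x hp)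
    (fun x hx => mul_nonneg (le_of_lt (lt_of_le_of_lt ha hx)) (Real.exp_pos _).le)
    (tendsto_aux2 p hp)

lemma integral_mul_exp_neg_mul (p a : ℝ) (hp : 0 < p) (ha : 0 ≤ a) :
    ∫ t in Ioi a, t * Real.exp (-p*t) = (a/p + 1/p^2) * Real.exp (-p*a) := by
  have := integral_Ioi_of_hasDerivAt_of_nonneg' (a := a)
    (fun x _ => hasDerivAt_mul_exp_neg_mul p x hp)
    (fun x hx => mul_nonneg (le_of_lt (lt_of_le_of_lt ha hx)) (Real.exp_pos _).le)
    (tendsto_aux2 p hp)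
  rw [this]
  ring

-- Integrability of the Laplace integrand for monotone locally integrable f
lemma integrableOn_laplace_integrand {f : ℝ → ℝ} (hf : LICM f) {p : ℝ} (hp : 0 < p) :
    IntegrableOn (fun t => Real.exp (-p*t) * f t) (Ioi 0) := by
  have hIoi : (Ioc (0:ℝ) 1) ∪ (Ioi 1) = Ioi 0 := Ioc_union_Ioi_eq_Ioi zero_le_one
  rw [← hIoi]
  apply IntegrableOn.union
  · -- on Ioc 0 1, dominated by f
    have hfIoc : IntegrableOn f (Ioc 0 1) := by
      have : IntegrableOn f (Ioo 0 1) := hf.2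
      rwa [IntegrableOn, Measure.restrict_congr_set Ioo_ae_eq_Ioc] at this
    apply Integrable.mono' hfIoc
    · exact ((Real.continuous_exp.comp (continuous_const.mul continuous_id)).continuousOn.mul
        (hf.continuousOn.mono Ioc_subset_Ioi_self)).aestronglyMeasurable measurableSet_Ioc
    · filter_upwards [ae_restrict_mem measurableSet_Ioc] with t ht
      have h1 : 0 ≤ f t := hf.nonneg ht.1
      rw [Real.norm_eq_abs, abs_of_nonneg (mul_nonneg (Real.exp_pos _).le h1)]
      calc Real.exp (-p*t) * f t ≤ 1 * f t := by
            apply mul_le_mul_of_nonneg_right _ h1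
            rw [← Real.exp_zero]
            exact Real.exp_le_exp.2 (by nlinarith [ht.1])
        _ = f t := one_mul _
  · -- on Ioi 1, dominated by f 1 * exp
    apply Integrable.mono' ((integrableOn_exp_neg_mul p 1 hp).const_mul (f 1))
    · exact ((Real.continuous_exp.comp (continuous_const.mul continuous_id)).continuousOn.mul
        (hf.continuousOn.mono (Ioi_subset_Ioi zero_le_one))).aestronglyMeasurable measurableSet_Ioi
    · filter_upwards [ae_restrict_mem measurableSet_Ioi] with t ht
      have h1 : 0 ≤ f t := hf.nonneg (lt_trans zero_lt_one ht)
      have h2 : f t ≤ f 1 := hf.antitoneOn (mem_Ioi.2 zero_lt_one)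
        (mem_Ioi.2 (lt_trans zero_lt_one ht)) ht.le
      rw [Real.norm_eq_abs, abs_of_nonneg (mul_nonneg (Real.exp_pos _).le h1)]
      calc Real.exp (-p*t) * f t ≤ Real.exp (-p*t) * f 1 :=
            mul_le_mul_of_nonneg_left h2 (Real.exp_pos _).le
        _ = f 1 * Real.exp (-p*t) := mul_comm _ _

lemma LICM.integrableOn_Ioo {g : ℝ → ℝ} (hg : LICM g) (t : ℝ) : IntegrableOn g (Ioo 0 t) := by
  rcases le_or_gt t 1 with ht | ht
  · exact hg.2.mono_set (Ioo_subset_Ioo_right ht)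
  · have hsub : Ioo (0:ℝ) t ⊆ Ioo 0 1 ∪ Icc 1 t := by
      intro s hs
      rcases lt_or_ge s 1 with h1 | h1
      · exact Or.inl ⟨hs.1, h1⟩
      · exact Or.inr ⟨h1, hs.2.le⟩
    exact (hg.2.union ((hg.continuousOn.mono (fun s hs => lt_of_lt_of_le zero_lt_one hs.1)).integrableOn_Icc)).mono_set hsub

lemma G_nonneg {g : ℝ → ℝ} (hg : LICM g) (t : ℝ) : 0 ≤ ∫ s in Ioo 0 t, g s := by
  apply setIntegral_nonneg measurableSet_Ioo
  exact fun s hs => hg.nonneg hs.1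

lemma G_mono {g : ℝ → ℝ} (hg : LICM g) : Monotone (fun t => ∫ s in Ioo 0 t, g s) := by
  intro t1 t2 h12
  apply setIntegral_mono_set (hg.integrableOn_Ioo t2)
  · filter_upwards [ae_restrict_mem measurableSet_Ioo] with s hs using hg.nonneg hs.1
  · exact HasSubset.Subset.eventuallyLE (Ioo_subset_Ioo_right h12)

lemma G_bound {g : ℝ → ℝ} (hg : LICM g) {t : ℝ} (ht : 0 < t) :
    ∫ s in Ioo 0 t, g s ≤ (∫ s in Ioo 0 1, g s) + g 1 * t := by
  have hg1 : 0 ≤ g 1 := hg.nonneg zero_lt_one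
  rcases le_or_gt t 1 with h1 | h1
  · have := G_mono hg h1
    nlinarith
  · have hu : Ioo (0:ℝ) 1 ∪ Ico 1 t = Ioo 0 t := Ioo_union_Ico_eq_Ioo zero_lt_one h1.le
    have hint2 : IntegrableOn g (Ico 1 t) :=
      ((hg.continuousOn.mono (fun s hs => lt_of_lt_of_le zero_lt_one hs.1)).integrableOn_Icc).mono_set Ico_subset_Icc_self
    have hsplit : ∫ s in Ioo 0 t, g s = (∫ s in Ioo 0 1, g s) + ∫ s in Ico 1 t, g s := by
      rw [← hu]
      exact setIntegral_union (by rw [Set.disjoint_left]; rintro s ⟨_, h⟩ ⟨h', _⟩; linarith)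
        measurableSet_Ico hg.2 hint2
    have hico : ∫ s in Ico 1 t, g s ≤ ∫ s in Ico 1 t, g 1 := by
      apply setIntegral_mono_on hint2 (integrableOn_const (by
        rw [Real.volume_Ico]; exact ENNReal.ofReal_ne_top)) measurableSet_Ico
      intro s hs
      exact hg.antitoneOn (mem_Ioi.2 zero_lt_one) (mem_Ioi.2 (lt_of_lt_of_le zero_lt_one hs.1)) hs.1
    have hconst : ∫ _ in Ico (1:ℝ) t, g 1 = (t - 1) * g 1 := by
      rw [setIntegral_const, Real.volume_real_Ico_of_le (by linarith), smul_eq_mul]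
    nlinarith

lemma G_small {g : ℝ → ℝ} (hg : LICM g) {ε : ℝ} (hε : 0 < ε) :
    ∃ δ > 0, (∫ s in Ioo 0 δ, g s) < ε := by
  have hanti : Antitone (fun n : ℕ => Ioo (0:ℝ) (1/(n+1))) := by
    intro m n hmn
    apply Ioo_subset_Ioo_right
    apply one_div_le_one_div_of_le (by positivity)
    have := (Nat.cast_le (α := ℝ)).2 hmn; linarith
  have hicap : (⋂ n : ℕ, Ioo (0:ℝ) (1/(n+1))) = ∅ := by
    ext x
    simp only [mem_iInter, mem_Ioo, mem_empty_iff_false, iff_false, not_forall]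
    by_cases hx : 0 < x
    · obtain ⟨n, hn⟩ := exists_nat_one_div_lt hx
      exact ⟨n, fun hc => absurd hc.2 (not_lt.2 hn.le)⟩
    · exact ⟨0, fun hc => hx hc.1⟩
  have := tendsto_setIntegral_of_antitone (f := g) (μ := volume)
    (fun n => measurableSet_Ioo) hanti ⟨0, by simpa using hg.integrableOn_Ioo (1/(0+1))⟩
  rw [hicap] at this
  simp only [Measure.restrict_empty, integral_zero_measure] at this
  have h2 := this.eventually (eventually_lt_nhds hε)
  obtain ⟨n, hn⟩ := h2.exists
  exact ⟨1/(n+1), by positivity, hn⟩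

lemma integral_exp_Ioc {p δ : ℝ} (hp : 0 < p) (hδ : 0 < δ) :
    ∫ t in Ioc 0 δ, Real.exp (-p*t) = (1 - Real.exp (-p*δ))/p := by
  have hu : Ioc (0:ℝ) δ ∪ Ioi δ = Ioi 0 := Ioc_union_Ioi_eq_Ioi hδ.le
  have hsplit : ∫ t in Ioi (0:ℝ), Real.exp (-p*t)
      = (∫ t in Ioc 0 δ, Real.exp (-p*t)) + ∫ t in Ioi δ, Real.exp (-p*t) := by
    rw [← hu]
    exact setIntegral_union (by rw [Set.disjoint_left]; rintro s ⟨_, h⟩ h'; exact absurd h (not_le.2 h'))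
      measurableSet_Ioi ((integrableOn_exp_neg_mul p 0 hp).mono_set (by rw [← hu]; exact subset_union_left))
      (integrableOn_exp_neg_mul p δ hp)
  rw [integral_exp_neg_mul p 0 hp, integral_exp_neg_mul p δ hp] at hsplit
  have h5 : (∫ t in Ioc (0:ℝ) δ, Real.exp (-p*t)) = Real.exp (-p*0)/p - Real.exp (-p*δ)/p := by
    linarith
  rw [h5, show -p*(0:ℝ) = 0 by ring, Real.exp_zero]
  ring

lemma laplace_nonneg {f : ℝ → ℝ} (hf : LICM f) (p : ℝ) : 0 ≤ laplace f p := by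
  apply setIntegral_nonneg measurableSet_Ioi
  exact fun t ht => mul_nonneg (Real.exp_pos _).le (hf.nonneg ht)

lemma laplace_pos {f : ℝ → ℝ} (hf : LICM f) {t₀ : ℝ} (ht₀ : 0 < t₀) (hft₀ : f t₀ ≠ 0)
    {p : ℝ} (hp : 0 < p) : 0 < laplace f p := by
  have hft : 0 < f t₀ := lt_of_le_of_ne (hf.nonneg ht₀) (Ne.symm hft₀)
  have hlow : ∀ t ∈ Ioo 0 t₀, Real.exp (-p*t₀) * f t₀ ≤ Real.exp (-p*t) * f t := by
    intro t ht
    apply mul_le_mul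
    · exact Real.exp_le_exp.2 (by nlinarith [ht.1, ht.2])
    · exact hf.antitoneOn (mem_Ioi.2 ht.1) (mem_Ioi.2 ht₀) ht.2.le
    · exact hft.le
    · exact (Real.exp_pos _).le
  have h1 : (t₀) * (Real.exp (-p*t₀) * f t₀) ≤ ∫ t in Ioo 0 t₀, Real.exp (-p*t) * f t := by
    have := setIntegral_mono_on (integrableOn_const (by
        rw [Real.volume_Ioo]; exact ENNReal.ofReal_ne_top))
      ((integrableOn_laplace_integrand hf hp).mono_set (fun t ht => ht.1))
      measurableSet_Ioo hlow
    rw [setIntegral_const, Real.volume_real_Ioo_of_le (by linarith), smul_eq_mul] at this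
    simpa using this
  have h2 : ∫ t in Ioo 0 t₀, Real.exp (-p*t) * f t ≤ laplace f p := by
    apply setIntegral_mono_set (integrableOn_laplace_integrand hf hp)
    · filter_upwards [ae_restrict_mem measurableSet_Ioi] with t ht using
        mul_nonneg (Real.exp_pos _).le (hf.nonneg ht)
    · exact HasSubset.Subset.eventuallyLE (fun t ht => ht.1)
  have : 0 < t₀ * (Real.exp (-p*t₀) * f t₀) := by positivity
  linarith

lemma laplace_lower {f : ℝ → ℝ} (hf : LICM f) {p δ K : ℝ} (hp : 0 < p) (hδ : 0 < δ)
    (hK : 0 ≤ K) (hfK : ∀ s ∈ Ioc (0:ℝ) δ, K ≤ f s) :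
    K * (1 - Real.exp (-p*δ)) ≤ p * laplace f p := by
  have h1 : ∫ t in Ioc (0:ℝ) δ, K * Real.exp (-p*t) ≤ ∫ t in Ioc (0:ℝ) δ, Real.exp (-p*t) * f t := by
    apply setIntegral_mono_on (((integrableOn_exp_neg_mul p 0 hp).mono_set Ioc_subset_Ioi_self).const_mul K)
      ((integrableOn_laplace_integrand hf hp).mono_set Ioc_subset_Ioi_self) measurableSet_Ioc
    intro t ht
    rw [mul_comm K _]
    exact mul_le_mul_of_nonneg_left (hfK t ht) (Real.exp_pos _).le
  have h2 : ∫ t in Ioc (0:ℝ) δ, Real.exp (-p*t) * f t ≤ laplace f p := by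
    apply setIntegral_mono_set (integrableOn_laplace_integrand hf hp)
    · filter_upwards [ae_restrict_mem measurableSet_Ioi] with t ht using
        mul_nonneg (Real.exp_pos _).le (hf.nonneg ht)
    · exact HasSubset.Subset.eventuallyLE Ioc_subset_Ioi_self
  have h3 : ∫ t in Ioc (0:ℝ) δ, K * Real.exp (-p*t) = K * ((1 - Real.exp (-p*δ))/p) := by
    rw [integral_const_mul _ _, integral_exp_Ioc hp hδ]
  have h4 : K * ((1 - Real.exp (-p*δ))/p) ≤ laplace f p := by
    rw [← h3]; linarith
  calc K * (1 - Real.exp (-p*δ)) = p * (K * ((1 - Real.exp (-p*δ))/p)) := by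
        field_simp
    _ ≤ p * laplace f p := mul_le_mul_of_nonneg_left h4 hp.le

lemma laplace_upper {f : ℝ → ℝ} (hf : LICM f) {p L : ℝ} (hp : 0 < p)
    (hfL : ∀ t ∈ Ioi (0:ℝ), f t ≤ L) : p * laplace f p ≤ L := by
  have h1 : laplace f p ≤ ∫ t in Ioi (0:ℝ), L * Real.exp (-p*t) := by
    apply setIntegral_mono_on (integrableOn_laplace_integrand hf hp)
      ((integrableOn_exp_neg_mul p 0 hp).const_mul L) measurableSet_Ioi
    intro t ht
    rw [mul_comm L _]
    exact mul_le_mul_of_nonneg_left (hfL t ht) (Real.exp_pos _).le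
  rw [integral_const_mul _ _, integral_exp_neg_mul p 0 hp] at h1
  have := mul_le_mul_of_nonneg_left h1 hp.le
  calc p * laplace f p ≤ p * (L * (Real.exp (-p*0)/p)) := this
    _ = L := by rw [mul_zero, Real.exp_zero]; field_simp

lemma exp_neg_tendsto_p (δ : ℝ) (hδ : 0 < δ) :
    Tendsto (fun p : ℝ => Real.exp (-p*δ)) atTop (nhds 0) := by
  exact (tendsto_exp_neg_mul δ hδ).congr fun p => by ring_nf

lemma tendsto_p_laplace_of_tendsto_atTop {f : ℝ → ℝ} (hf : LICM f)
    (h0 : Tendsto f (nhdsWithin 0 (Ioi 0)) atTop) :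
    Tendsto (fun p => p * laplace f p) atTop atTop := by
  rw [tendsto_atTop]
  intro M
  obtain ⟨K, hK, hM⟩ : ∃ K : ℝ, 0 ≤ K ∧ M ≤ K * (1/2) :=
    ⟨2 * max M 0 + 2, by positivity, by nlinarith [le_max_left M 0]⟩
  have hev : ∀ᶠ s in nhdsWithin 0 (Ioi 0), K ≤ f s := h0.eventually (eventually_ge_atTop K)
  rw [eventually_iff, mem_nhdsGT_iff_exists_Ioo_subset] at hev
  obtain ⟨u, hu, hsub⟩ := hev
  have hu0 : (0:ℝ) < u := hu
  set δ := u/2 with hδdef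
  have hδ : 0 < δ := by positivity
  have hKf : ∀ s ∈ Ioc (0:ℝ) δ, K ≤ f s := by
    intro s hs
    exact hsub ⟨hs.1, lt_of_le_of_lt hs.2 (by simp [hδdef]; linarith)⟩
  have hexp := (exp_neg_tendsto_p δ hδ).eventually (eventually_le_nhds (by norm_num : (0:ℝ) < 1/2))
  filter_upwards [hexp, eventually_gt_atTop 0] with p hp1 hp2
  have hlow := laplace_lower hf hp2 hδ hK hKf
  have : K * (1/2) ≤ K * (1 - Real.exp (-p*δ)) :=
    mul_le_mul_of_nonneg_left (by linarith) hK
  linarith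

lemma le_of_antitone_tendsto {f : ℝ → ℝ} (hf : LICM f) {L : ℝ}
    (h0 : Tendsto f (nhdsWithin 0 (Ioi 0)) (nhds L)) {t : ℝ} (ht : 0 < t) : f t ≤ L := by
  apply ge_of_tendsto h0
  rw [eventually_nhdsWithin_iff]
  filter_upwards [eventually_lt_nhds ht] with s hs hs'
  exact hf.antitoneOn (mem_Ioi.2 hs') (mem_Ioi.2 ht) hs.le

lemma tendsto_p_laplace_of_tendsto_nhds {f : ℝ → ℝ} (hf : LICM f) {L : ℝ}
    (h0 : Tendsto f (nhdsWithin 0 (Ioi 0)) (nhds L)) :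
    Tendsto (fun p => p * laplace f p) atTop (nhds L) := by
  rw [Metric.tendsto_atTop]
  intro ε hε
  have hev : ∀ᶠ s in nhdsWithin 0 (Ioi 0), L - ε/2 ≤ f s := by
    have := h0.eventually (eventually_ge_nhds (by linarith : L - ε/2 < L))
    exact this
  rw [eventually_iff, mem_nhdsGT_iff_exists_Ioo_subset] at hev
  obtain ⟨u, hu, hsub⟩ := hev
  have hu0 : (0:ℝ) < u := hu
  set δ := u/2 with hδdef
  have hδ : 0 < δ := by positivity
  obtain ⟨K, hK, hKL, hKup⟩ : ∃ K : ℝ, 0 ≤ K ∧ L - ε/2 ≤ K ∧ K ≤ max (L - ε/2) 0 :=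
    ⟨max (L - ε/2) 0, le_max_right _ _, le_max_left _ _, le_rfl⟩
  have hKf : ∀ s ∈ Ioc (0:ℝ) δ, K ≤ f s := by
    intro s hs
    have hmem : s ∈ Ioo (0:ℝ) u := ⟨hs.1, lt_of_le_of_lt hs.2 (by simp [hδdef]; linarith)⟩
    calc K ≤ max (L - ε/2) 0 := hKup
      _ ≤ f s := max_le (hsub hmem) (hf.nonneg hs.1)
  have hexpK' : ∀ᶠ p : ℝ in atTop, K * Real.exp (-p*δ) < ε/4 := by
    have h2 := (exp_neg_tendsto_p δ hδ).const_mul K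
    rw [mul_zero] at h2
    exact h2.eventually (eventually_lt_nhds (by linarith : (0:ℝ) < ε/4))
  rw [← eventually_atTop]
  filter_upwards [hexpK', eventually_gt_atTop 0] with p hp1 hp2
  have hlow := laplace_lower hf hp2 hδ hK hKf
  have hup := laplace_upper hf hp2 (fun t ht => le_of_antitone_tendsto hf h0 ht)
  have hexp01 : 0 < Real.exp (-p*δ) := Real.exp_pos _
  have hexple : Real.exp (-p*δ) ≤ 1 := by
    rw [← Real.exp_zero]
    apply Real.exp_le_exp.2
    nlinarith
  have hlow2 : L - ε/2 - K * Real.exp (-p*δ) ≤ p * laplace f p := by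
    have : K * (1 - Real.exp (-p*δ)) = K - K * Real.exp (-p*δ) := by ring
    nlinarith
  rw [Real.dist_eq, abs_lt]
  constructor <;> nlinarith

lemma tendsto_p_laplace_bernstein {h : ℝ → ℝ} {c b : ℝ} {g : ℝ → ℝ}
    (hc : 0 ≤ c) (hb : 0 ≤ b) (hg : LICM g)
    (hrep : ∀ t ≥ 0, h t = c + b * t + ∫ s in Ioo 0 t, g s) :
    Tendsto (fun p => p * laplace h p) atTop (nhds c) := by
  set G : ℝ → ℝ := fun t => ∫ s in Ioo 0 t, g s with hGdef
  set A : ℝ := G 1 with hAdef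
  set B : ℝ := g 1 with hBdef
  have hA : 0 ≤ A := G_nonneg hg 1
  have hB : 0 ≤ B := hg.nonneg zero_lt_one
  have hGnn : ∀ t, 0 ≤ G t := G_nonneg hg
  have hGmono : Monotone G := G_mono hg
  have hGb : ∀ t : ℝ, 0 < t → G t ≤ A + B * t := fun t ht => G_bound hg ht
  have hh_eq : ∀ t ∈ Ioi (0:ℝ), h t = c + b*t + G t := fun t ht => hrep t (le_of_lt ht)
  have hh_lb : ∀ t ∈ Ioi (0:ℝ), c ≤ h t := by
    intro t ht
    rw [hh_eq t ht]
    have := hGnn t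
    have ht' : (0:ℝ) < t := ht
    nlinarith
  have hh_ub : ∀ t ∈ Ioi (0:ℝ), h t ≤ (c+A) + (b+B)*t := by
    intro t ht
    rw [hh_eq t ht]
    have := hGb t ht
    nlinarith
  have hint : ∀ p : ℝ, 0 < p → IntegrableOn (fun t => Real.exp (-p*t) * h t) (Ioi 0) := by
    intro p hp
    apply Integrable.mono' (((integrableOn_exp_neg_mul p 0 hp).const_mul (c+A)).add
      ((integrableOn_mul_exp_neg_mul p 0 hp le_rfl).const_mul (b+B)))
    · have hm : Measurable (fun t => Real.exp (-p*t) * (c + b*t + G t)) := by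
        apply Measurable.mul
        · exact (Real.continuous_exp.comp (continuous_const.mul continuous_id)).measurable
        · exact ((measurable_const.add (measurable_id.const_mul b)).add hGmono.measurable)
      apply (hm.aestronglyMeasurable).congr
      filter_upwards [ae_restrict_mem measurableSet_Ioi] with t ht
      rw [hh_eq t ht]
    · filter_upwards [ae_restrict_mem measurableSet_Ioi] with t ht
      have h1 := hh_lb t ht
      have h2 := hh_ub t ht
      have hE := Real.exp_pos (-p*t)
      rw [Real.norm_eq_abs, abs_of_nonneg (mul_nonneg hE.le (le_trans hc h1))]
      have : Real.exp (-p*t) * h t ≤ Real.exp (-p*t) * ((c+A) + (b+B)*t) :=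
        mul_le_mul_of_nonneg_left h2 hE.le
      simp only [Pi.add_apply]
      nlinarith
  have hlb : ∀ p : ℝ, 0 < p → c ≤ p * laplace h p := by
    intro p hp
    have h1 : ∫ t in Ioi (0:ℝ), c * Real.exp (-p*t) ≤ laplace h p := by
      apply setIntegral_mono_on ((integrableOn_exp_neg_mul p 0 hp).const_mul c)
        (hint p hp) measurableSet_Ioi
      intro t ht
      have hE := Real.exp_pos (-p*t)
      have := hh_lb t ht
      nlinarith
    rw [integral_const_mul _ _, integral_exp_neg_mul p 0 hp] at h1
    have h2 := mul_le_mul_of_nonneg_left h1 hp.le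
    calc c = p * (c * (Real.exp (-p*0)/p)) := by rw [mul_zero, Real.exp_zero]; field_simp
      _ ≤ p * laplace h p := h2
  have hub : ∀ δ : ℝ, 0 < δ → ∀ p : ℝ, 0 < p →
      p * laplace h p ≤ (c + b*δ + G δ) +
        ((c+A) * Real.exp (-p*δ) + (b+B)*((δ + 1/p) * Real.exp (-p*δ))) := by
    intro δ hδ p hp
    have hu : Ioc (0:ℝ) δ ∪ Ioi δ = Ioi 0 := Ioc_union_Ioi_eq_Ioi hδ.le
    have hsplit : laplace h p = (∫ t in Ioc (0:ℝ) δ, Real.exp (-p*t) * h t)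
        + ∫ t in Ioi δ, Real.exp (-p*t) * h t := by
      rw [laplace, ← hu]
      exact setIntegral_union (by rw [Set.disjoint_left]; rintro s ⟨_, h1⟩ h2; exact absurd h1 (not_le.2 h2))
        measurableSet_Ioi ((hint p hp).mono_set Ioc_subset_Ioi_self)
        ((hint p hp).mono_set (Ioi_subset_Ioi hδ.le))
    have hI1 : (∫ t in Ioc (0:ℝ) δ, Real.exp (-p*t) * h t)
        ≤ (c + b*δ + G δ) * ((1 - Real.exp (-p*δ))/p) := by
      have step : (∫ t in Ioc (0:ℝ) δ, Real.exp (-p*t) * h t)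
          ≤ ∫ t in Ioc (0:ℝ) δ, (c + b*δ + G δ) * Real.exp (-p*t) := by
        apply setIntegral_mono_on ((hint p hp).mono_set Ioc_subset_Ioi_self)
          (((integrableOn_exp_neg_mul p 0 hp).mono_set Ioc_subset_Ioi_self).const_mul _)
          measurableSet_Ioc
        intro t ht
        have hE := Real.exp_pos (-p*t)
        have heq := hh_eq t ht.1
        have h1 : h t ≤ c + b*δ + G δ := by
          rw [heq]
          have := hGmono ht.2
          have := mul_le_mul_of_nonneg_left ht.2 hb
          nlinarith
        nlinarith
      rw [integral_const_mul _ _, integral_exp_Ioc hp hδ] at step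
      exact step
    have hI2 : (∫ t in Ioi δ, Real.exp (-p*t) * h t)
        ≤ (c+A) * (Real.exp (-p*δ)/p) + (b+B)*((δ/p + 1/p^2) * Real.exp (-p*δ)) := by
      have step : (∫ t in Ioi δ, Real.exp (-p*t) * h t)
          ≤ ∫ t in Ioi δ, ((c+A) * Real.exp (-p*t) + (b+B) * (t * Real.exp (-p*t))) := by
        apply setIntegral_mono_on ((hint p hp).mono_set (Ioi_subset_Ioi hδ.le))
          (((integrableOn_exp_neg_mul p δ hp).const_mul _).add
            ((integrableOn_mul_exp_neg_mul p δ hp hδ.le).const_mul _)) measurableSet_Ioi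
        intro t ht
        have hE := Real.exp_pos (-p*t)
        have h2 := hh_ub t (lt_trans hδ ht)
        simp only [Pi.add_apply]
        nlinarith
      rw [integral_add (((integrableOn_exp_neg_mul p δ hp).const_mul _))
        (((integrableOn_mul_exp_neg_mul p δ hp hδ.le).const_mul _)),
        integral_const_mul _ _, integral_const_mul _ _, integral_exp_neg_mul p δ hp,
        integral_mul_exp_neg_mul p δ hp hδ.le] at step
      exact step
    have hco : 0 ≤ c + b*δ + G δ := by
      have := hGnn δ
      nlinarith
    have hE0 := Real.exp_pos (-p*δ)
    have hE1 : Real.exp (-p*δ) ≤ 1 := by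
      rw [← Real.exp_zero]
      apply Real.exp_le_exp.2
      nlinarith
    have htot : laplace h p ≤ (c + b*δ + G δ) * ((1 - Real.exp (-p*δ))/p)
        + ((c+A) * (Real.exp (-p*δ)/p) + (b+B)*((δ/p + 1/p^2) * Real.exp (-p*δ))) := by
      rw [hsplit]; linarith
    have h3 := mul_le_mul_of_nonneg_left htot hp.le
    have h4 : p * ((c + b*δ + G δ) * ((1 - Real.exp (-p*δ))/p)
        + ((c+A) * (Real.exp (-p*δ)/p) + (b+B)*((δ/p + 1/p^2) * Real.exp (-p*δ))))
        = (c + b*δ + G δ) * (1 - Real.exp (-p*δ))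
          + ((c+A) * Real.exp (-p*δ) + (b+B)*((δ + 1/p) * Real.exp (-p*δ))) := by
      field_simp
    rw [h4] at h3
    have h5 : (c + b*δ + G δ) * (1 - Real.exp (-p*δ)) ≤ (c + b*δ + G δ) := by
      nlinarith
    linarith
  -- now the limit
  rw [Metric.tendsto_atTop]
  intro ε hε
  obtain ⟨δ1, hδ1, hGδ1⟩ := G_small hg (show (0:ℝ) < ε/4 by linarith)
  set δ : ℝ := min δ1 (ε/(4*(b+1))) with hδdef
  have hδ : 0 < δ := lt_min hδ1 (by positivity)
  have hGδ : G δ < ε/4 := lt_of_le_of_lt (hGmono (min_le_left _ _)) hGδ1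
  have hbδ : b * δ ≤ ε/4 := by
    have h1 : δ ≤ ε/(4*(b+1)) := min_le_right _ _
    have h2 : b * δ ≤ b * (ε/(4*(b+1))) := mul_le_mul_of_nonneg_left h1 hb
    have h3 : b * (ε/(4*(b+1))) ≤ ε/4 := by
      rw [mul_div_assoc'] at *
      rw [div_le_div_iff₀ (by positivity : (0:ℝ) < 4*(b+1)) (by norm_num : (0:ℝ) < 4)]
      nlinarith
    linarith
  have hR : Tendsto (fun p : ℝ => (c+A) * Real.exp (-p*δ)
      + (b+B)*((δ + 1/p) * Real.exp (-p*δ))) atTop (nhds 0) := by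
    have t1 := exp_neg_tendsto_p δ hδ
    have t2 : Tendsto (fun p : ℝ => δ + 1/p) atTop (nhds (δ + 0)) := by
      apply tendsto_const_nhds.add
      exact tendsto_inv_atTop_zero.congr fun p => (one_div p).symm
    rw [add_zero] at t2
    have t3 := t2.mul t1
    rw [mul_zero] at t3
    have t4 := (t1.const_mul (c+A)).add (t3.const_mul (b+B))
    rw [mul_zero, mul_zero, add_zero] at t4
    exact t4
  have hRev := hR.eventually (eventually_lt_nhds (show (0:ℝ) < ε/4 by linarith))
  rw [← eventually_atTop]
  filter_upwards [hRev, eventually_gt_atTop 0] with p hp1 hp2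
  have h1 := hlb p hp2
  have h2 := hub δ hδ p hp2
  rw [Real.dist_eq, abs_lt]
  constructor <;> nlinarith

/-- A Bernstein function on `[0,∞)`: `h t = c + b t + ∫_0^t g` with `c, b ≥ 0` and `g` LICM. -/
def IsBernstein (h : ℝ → ℝ) : Prop :=
  ∃ (c b : ℝ) (g : ℝ → ℝ), 0 ≤ c ∧ 0 ≤ b ∧ LICM g ∧
    ∀ t ≥ 0, h t = c + b * t + ∫ s in Ioo 0 t, g s

theorem duality_creep_value_at_zero (f₀ : ℝ → ℝ) (β : ℝ) (h : ℝ → ℝ)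
    (hf : LICM f₀) (hne : ∃ t > 0, f₀ t ≠ 0) (hβ : 0 ≤ β)
    (hB : IsBernstein h)
    (hdual : ∀ p > 0, (β * p + p * laplace f₀ p)⁻¹ = p * laplace h p) :
    ((0 < β ∨ Tendsto f₀ (nhdsWithin 0 (Ioi 0)) atTop) → h 0 = 0) ∧
    (β = 0 → ∀ L : ℝ, Tendsto f₀ (nhdsWithin 0 (Ioi 0)) (nhds L) → h 0 = 1 / L) := by
  obtain ⟨c, b, g, hc, hb, hg, hrep⟩ := hB
  have hh0 : h 0 = c := by
    have := hrep 0 le_rfl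
    simpa using this
  have hΨ : Tendsto (fun p => p * laplace h p) atTop (nhds c) :=
    tendsto_p_laplace_bernstein hc hb hg hrep
  obtain ⟨t₀, ht₀, hft₀⟩ := hne
  constructor
  · intro hcase
    have hden : Tendsto (fun p => β * p + p * laplace f₀ p) atTop atTop := by
      cases hcase with
      | inl hβpos =>
          apply tendsto_atTop_mono' atTop (f₁ := fun p : ℝ => β * p)
          · filter_upwards [eventually_ge_atTop 0] with p hp
            have := laplace_nonneg hf p
            nlinarith
          · exact tendsto_id.const_mul_atTop hβpos
      | inr htop =>
          apply tendsto_atTop_mono' atTop (f₁ := fun p : ℝ => p * laplace f₀ p)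
          · filter_upwards [eventually_ge_atTop 0] with p hp
            nlinarith
          · exact tendsto_p_laplace_of_tendsto_atTop hf htop
    have hΨ0 : Tendsto (fun p => p * laplace h p) atTop (nhds 0) := by
      apply hden.inv_tendsto_atTop.congr'
      filter_upwards [eventually_gt_atTop 0] with p hp
      exact hdual p hp
    rw [hh0, tendsto_nhds_unique hΨ hΨ0]
  · intro hβ0 L hL
    have hΦ : Tendsto (fun p => p * laplace f₀ p) atTop (nhds L) :=
      tendsto_p_laplace_of_tendsto_nhds hf hL
    have hprod : Tendsto (fun p => (p * laplace h p) * (p * laplace f₀ p)) atTop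
        (nhds (c * L)) := hΨ.mul hΦ
    have hev : (fun p => (p * laplace h p) * (p * laplace f₀ p)) =ᶠ[atTop] fun _ => 1 := by
      filter_upwards [eventually_gt_atTop 0] with p hp
      have hd := hdual p hp
      rw [hβ0, zero_mul, zero_add] at hd
      have hpos : 0 < p * laplace f₀ p := mul_pos hp (laplace_pos hf ht₀ hft₀ hp)
      rw [← hd]
      field_simp
      exact div_self (laplace_pos hf ht₀ hft₀ hp).ne'
    have h1 : c * L = 1 := tendsto_nhds_unique (hprod.congr' hev) tendsto_const_nhds
    have hL0 : L ≠ 0 := by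
      intro h0
      rw [h0, mul_zero] at h1
      norm_num at h1
    rw [hh0]
    field_simp
    linarith [h1]
end

section
/- Under the hypotheses of the scalar duality theorem (f₀ LICM not identically zero, β ≥ 0, h Bernstein with 1/(β·p + p·f̃₀(p)) = p·h̃(p)): the limit f_∞ := lim_{t→∞} f₀(t) exists and is nonnegative; if f_∞ > 0 then lim_{t→∞} h(t) = 1/f_∞, and if f_∞ = 0 then h(t) → ∞ as t → ∞. -/
open MeasureTheory Filter Set

namespace DualityAux

variable {f : ℝ → ℝ}

lemma licm_nonneg (hf : LICM f) : ∀ t ∈ Ioi (0:ℝ), 0 ≤ f t := by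
  intro t ht
  simpa using hf.1.2 0 t ht

lemma licm_antitone (hf : LICM f) : AntitoneOn f (Ioi 0) := by
  have hdiff : DifferentiableOn ℝ f (Ioi 0) :=
    hf.1.1.differentiableOn (by norm_num)
  apply antitoneOn_of_deriv_nonpos (convex_Ioi 0) (hf.1.1.continuousOn)
  · rwa [interior_Ioi]
  · intro x hx
    rw [interior_Ioi] at hx
    have h1 := hf.1.2 1 x hx
    rw [iteratedDerivWithin_one,
      derivWithin_of_isOpen isOpen_Ioi hx] at h1
    simpa using h1

lemma antitone_tendsto (hf0 : ∀ t ∈ Ioi (0:ℝ), 0 ≤ f t) (hanti : AntitoneOn f (Ioi 0)) :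
    ∃ finf : ℝ, 0 ≤ finf ∧ Tendsto f atTop (nhds finf) ∧ ∀ t ∈ Ioi (0:ℝ), finf ≤ f t := by
  set S := f '' Ioi (0:ℝ) with hS
  have hSne : S.Nonempty := ⟨f 1, 1, by norm_num, rfl⟩
  have hSbdd : BddBelow S := ⟨0, by rintro y ⟨t, ht, rfl⟩; exact hf0 t ht⟩
  have hle : ∀ t ∈ Ioi (0:ℝ), sInf S ≤ f t := fun t ht => csInf_le hSbdd ⟨t, ht, rfl⟩
  refine ⟨sInf S, le_csInf hSne (by rintro y ⟨t, ht, rfl⟩; exact hf0 t ht), ?_, hle⟩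
  rw [Metric.tendsto_atTop]
  intro ε hε
  obtain ⟨y, hyS, hy⟩ := exists_lt_of_csInf_lt hSne (lt_add_of_pos_right (sInf S) hε)
  obtain ⟨t₀, ht₀, rfl⟩ := hyS
  refine ⟨max t₀ 1, fun t ht => ?_⟩
  have htpos : (0:ℝ) < t := lt_of_lt_of_le one_pos (le_trans (le_max_right _ _) ht)
  have h1 : f t ≤ f t₀ := hanti ht₀ htpos (le_trans (le_max_left _ _) ht)
  have h2 : sInf S ≤ f t := hle t htpos
  rw [Real.dist_eq, abs_lt]
  constructor <;> linarith

lemma monotoneOn_tendsto_atTop {h : ℝ → ℝ} (hmono : MonotoneOn h (Ici 0))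
    (hub : ¬BddAbove (h '' Ici 0)) : Tendsto h atTop atTop := by
  rw [tendsto_atTop]
  intro C
  obtain ⟨y, ⟨t₀, ht₀, rfl⟩, hC⟩ := not_bddAbove_iff.1 hub C
  filter_upwards [eventually_ge_atTop t₀] with t ht
  exact le_trans hC.le (hmono ht₀ (le_trans ht₀ ht) ht)

lemma monotoneOn_tendsto {h : ℝ → ℝ} (hmono : MonotoneOn h (Ici 0))
    (hbdd : BddAbove (h '' Ici 0)) :
    Tendsto h atTop (nhds (sSup (h '' Ici 0))) ∧
      ∀ t ∈ Ici (0:ℝ), h t ≤ sSup (h '' Ici 0) := by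
  set S := h '' Ici (0:ℝ) with hS
  have hSne : S.Nonempty := ⟨h 0, 0, by norm_num, rfl⟩
  have hle : ∀ t ∈ Ici (0:ℝ), h t ≤ sSup S := fun t ht => le_csSup hbdd ⟨t, ht, rfl⟩
  refine ⟨?_, hle⟩
  rw [Metric.tendsto_atTop]
  intro ε hε
  obtain ⟨y, hyS, hy⟩ := exists_lt_of_lt_csSup hSne (sub_lt_self (sSup S) hε)
  obtain ⟨t₀, ht₀, rfl⟩ := hyS
  refine ⟨max t₀ 1, fun t ht => ?_⟩
  have htnn : (0:ℝ) ≤ t := le_trans (le_trans zero_le_one (le_max_right _ _)) ht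
  have h1 : h t₀ ≤ h t := hmono ht₀ htnn (le_trans (le_max_left _ _) ht)
  have h2 : h t ≤ sSup S := hle t htnn
  rw [Real.dist_eq, abs_lt]
  constructor <;> linarith

lemma laplace_integrand_integrable
    (hmeas : AEStronglyMeasurable f (volume.restrict (Ioi 0)))
    (hf0 : ∀ t ∈ Ioi (0:ℝ), 0 ≤ f t) (hanti : AntitoneOn f (Ioi 0))
    (hint : IntegrableOn f (Ioo 0 1)) {p : ℝ} (hp : 0 < p) :
    IntegrableOn (fun t => Real.exp (-p * t) * f t) (Ioi 0) := by
  have hm : AEStronglyMeasurable (fun t => Real.exp (-p*t) * f t) (volume.restrict (Ioi 0)) :=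
    ((Real.continuous_exp.comp (continuous_const.mul continuous_id)).aestronglyMeasurable.mono_measure
      Measure.restrict_le_self).mul hmeas
  rw [← Ioo_union_Ici_eq_Ioi (show (0:ℝ) < 1 by norm_num)]
  apply IntegrableOn.union
  · apply Integrable.mono hint (hm.mono_measure (Measure.restrict_mono Ioo_subset_Ioi_self le_rfl))
    filter_upwards [ae_restrict_mem measurableSet_Ioo] with t ht
    have h1 : 0 ≤ f t := hf0 t ht.1
    have h2 : Real.exp (-p*t) ≤ 1 := by
      rw [Real.exp_le_one_iff]
      nlinarith [ht.1]
    rw [Real.norm_eq_abs, Real.norm_eq_abs, abs_mul, abs_of_nonneg h1,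
      abs_of_nonneg (Real.exp_pos _).le]
    nlinarith [Real.exp_pos (-p*t)]
  · rw [integrableOn_Ici_iff_integrableOn_Ioi]
    apply Integrable.mono' ((exp_neg_integrableOn_Ioi 1 hp).mul_const (f 1))
      (hm.mono_measure (Measure.restrict_mono (Ioi_subset_Ioi one_pos.le) le_rfl))
    · filter_upwards [ae_restrict_mem measurableSet_Ioi] with t (ht : 1 < t)
      have htpos : (0:ℝ) < t := lt_trans one_pos ht
      have h1 : f t ≤ f 1 := hanti (by norm_num) htpos ht.le
      have h0 : 0 ≤ f t := hf0 t htpos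
      rw [Real.norm_eq_abs, abs_mul, abs_of_nonneg h0, abs_of_nonneg (Real.exp_pos _).le]
      nlinarith [Real.exp_pos (-p*t)]

lemma laplace_scaled (f : ℝ → ℝ) {p : ℝ} (hp : 0 < p) :
    p * laplace f p = ∫ u in Ioi (0:ℝ), Real.exp (-u) * f (u / p) := by
  have h1 := integral_comp_mul_left_Ioi (fun u => Real.exp (-u) * f (u / p)) 0 hp
  simp only [mul_zero, smul_eq_mul] at h1
  have h2 : (∫ x in Ioi (0:ℝ), Real.exp (-(p*x)) * f (p*x/p)) = laplace f p := by
    unfold laplace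
    apply integral_congr_ae
    filter_upwards with x
    rw [mul_div_cancel_left₀ _ hp.ne', neg_mul]
  rw [h2] at h1
  rw [h1]
  field_simp

lemma integral_exp_neg_mul_Ioi {p a : ℝ} (hp : 0 < p) :
    ∫ t in Ioi a, Real.exp (-p * t) = Real.exp (-(p*a)) / p := by
  have h1 := integral_comp_mul_left_Ioi (fun u => Real.exp (-u)) a hp
  simp only [smul_eq_mul, integral_exp_neg_Ioi] at h1
  rw [show (fun t => Real.exp (-p * t)) = fun t => Real.exp (-(p*t)) by ext t; ring_nf]
  rw [h1]
  ring

lemma abelian {φ : ℝ → ℝ} {M : ℝ} (bound : ℝ → ℝ)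
    (hmeas : ∀ p ∈ Ioo (0:ℝ) 1, AEStronglyMeasurable (fun u => Real.exp (-u) * φ (u/p))
      (volume.restrict (Ioi 0)))
    (hbound_int : IntegrableOn bound (Ioi 0))
    (hb : ∀ p ∈ Ioo (0:ℝ) 1, ∀ u ∈ Ioi (0:ℝ), ‖Real.exp (-u) * φ (u/p)‖ ≤ bound u)
    (hlim : Tendsto φ atTop (nhds M)) :
    Tendsto (fun p => ∫ u in Ioi (0:ℝ), Real.exp (-u) * φ (u/p)) (nhdsWithin 0 (Ioi 0)) (nhds M) := by
  have hIoo : Ioo (0:ℝ) 1 ∈ nhdsWithin (0:ℝ) (Ioi 0) :=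
    Ioo_mem_nhdsGT_of_mem (left_mem_Ico.2 one_pos)
  have key : Tendsto (fun p => ∫ u in Ioi (0:ℝ), Real.exp (-u) * φ (u/p)) (nhdsWithin 0 (Ioi 0))
      (nhds (∫ u in Ioi (0:ℝ), Real.exp (-u) * M)) := by
    apply tendsto_integral_filter_of_dominated_convergence bound
    · filter_upwards [hIoo] with p hp
      exact hmeas p hp
    · filter_upwards [hIoo] with p hp
      filter_upwards [ae_restrict_mem measurableSet_Ioi] with u hu
      exact hb p hp u hu
    · exact hbound_int
    · filter_upwards [ae_restrict_mem measurableSet_Ioi] with u hu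
      have h1 : Tendsto (fun p : ℝ => u / p) (nhdsWithin 0 (Ioi 0)) atTop := by
        have := Tendsto.const_mul_atTop (show (0:ℝ) < u from hu) tendsto_inv_nhdsGT_zero
        simpa [div_eq_mul_inv] using this
      exact (hlim.comp h1).const_mul _
  have h2 : (∫ u in Ioi (0:ℝ), Real.exp (-u) * M) = M := by
    rw [integral_mul_const, integral_exp_neg_Ioi]
    simp
  rwa [h2] at key

lemma laplace_pos (hmeas : AEStronglyMeasurable f (volume.restrict (Ioi 0)))
    (hf0 : ∀ t ∈ Ioi (0:ℝ), 0 ≤ f t) (hanti : AntitoneOn f (Ioi 0))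
    (hint : IntegrableOn f (Ioo 0 1)) {t₀ : ℝ} (ht₀ : 0 < t₀) (hpos : 0 < f t₀)
    {p : ℝ} (hp : 0 < p) : 0 < laplace f p := by
  have hII : IntegrableOn (fun t => Real.exp (-p * t) * f t) (Ioi 0) :=
    laplace_integrand_integrable hmeas hf0 hanti hint hp
  have hsub : Ioo (t₀/2) t₀ ⊆ Ioi (0:ℝ) := fun x hx => lt_trans (half_pos ht₀) hx.1
  have hμ : (volume (Ioo (t₀/2) t₀)).toReal = t₀/2 := by
    rw [Real.volume_Ioo, ENNReal.toReal_ofReal (by linarith)]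
    ring
  have h1 : Real.exp (-p*t₀) * f t₀ * (t₀/2) ≤ ∫ t in Ioo (t₀/2) t₀, Real.exp (-p*t) * f t := by
    have h1' := setIntegral_ge_of_const_le (μ := volume) (s := Ioo (t₀/2) t₀)
      (f := fun t => Real.exp (-p*t) * f t) (c := Real.exp (-p*t₀) * f t₀)
      measurableSet_Ioo (by rw [Real.volume_Ioo]; exact ENNReal.ofReal_ne_top) ?_
      (hII.mono_set hsub)
    · rw [measureReal_def, hμ, smul_eq_mul] at h1'; linarith
    · intro x hx
      have hx0 : x ∈ Ioi (0:ℝ) := hsub hx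
      have hft : f t₀ ≤ f x := hanti hx0 ht₀ hx.2.le
      have hf0x : 0 ≤ f x := hf0 x hx0
      have hexp : Real.exp (-p*t₀) ≤ Real.exp (-p*x) := by
        apply Real.exp_le_exp.2
        nlinarith [hx.2]
      exact le_trans (mul_le_mul_of_nonneg_right hexp hpos.le)
        (mul_le_mul_of_nonneg_left hft (Real.exp_pos _).le)
  have h2 : (∫ t in Ioo (t₀/2) t₀, Real.exp (-p*t) * f t) ≤ laplace f p := by
    apply setIntegral_mono_set hII
    · filter_upwards [ae_restrict_mem measurableSet_Ioi] with t ht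
      exact mul_nonneg (Real.exp_pos _).le (hf0 t ht)
    · exact HasSubset.Subset.eventuallyLE hsub
  have h3 : 0 < Real.exp (-p*t₀) * f t₀ * (t₀/2) := by positivity
  linarith

lemma linear_exp_integrable {A B p : ℝ} (hp : 0 < p) :
    IntegrableOn (fun t => (A + B * t) * Real.exp (-p * t)) (Ioi 0) := by
  apply integrable_of_isBigO_exp_neg (half_pos hp)
  · exact (continuous_const.add (continuous_const.mul continuous_id)).continuousOn.mul
      (Real.continuous_exp.comp (continuous_const.mul continuous_id)).continuousOn
  · rw [Asymptotics.isBigO_iff]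
    refine ⟨1, ?_⟩
    have hten : Tendsto (fun t : ℝ => (A + B * t) * Real.exp (-(p/2) * t)) atTop (nhds 0) := by
      have h1 : Tendsto (fun t : ℝ => Real.exp (-(p/2) * t)) atTop (nhds 0) := by
        apply Real.tendsto_exp_atBot.comp
        exact Tendsto.const_mul_atTop_of_neg (by linarith) tendsto_id
      have h2 : Tendsto (fun t : ℝ => t * Real.exp (-(p/2) * t)) atTop (nhds 0) := by
        have h3 := (Real.tendsto_pow_mul_exp_neg_atTop_nhds_zero 1).comp
          (Tendsto.const_mul_atTop (half_pos hp) tendsto_id)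
        have h4 := h3.const_mul (2/p)
        rw [mul_zero] at h4
        apply h4.congr
        intro t
        simp only [Function.comp_apply, pow_one, id]
        field_simp
      have := (h1.const_mul A).add (h2.const_mul B)
      simp only [mul_zero, add_zero] at this
      apply this.congr
      intro t; ring
    have h5 := hten.eventually (eventually_abs_sub_lt 0 one_pos)
    filter_upwards [h5, eventually_ge_atTop (0:ℝ)] with t ht ht0
    simp only [sub_zero] at ht
    have heq : (A + B * t) * Real.exp (-p * t)
        = ((A + B * t) * Real.exp (-(p/2) * t)) * Real.exp (-(p/2) * t) := by
      rw [mul_assoc, ← Real.exp_add]; ring_nf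
    rw [Real.norm_eq_abs, Real.norm_eq_abs, heq, abs_mul, abs_of_nonneg (Real.exp_pos _).le]
    nlinarith [Real.exp_pos (-(p/2) * t), abs_nonneg ((A + B * t) * Real.exp (-(p/2) * t))]

end DualityAux

theorem duality_creep_limit_at_infinity (f₀ : ℝ → ℝ) (β : ℝ) (h : ℝ → ℝ)
    (hf : LICM f₀) (hne : ∃ t > 0, f₀ t ≠ 0) (hβ : 0 ≤ β)
    (hB : IsBernstein h)
    (hdual : ∀ p > 0, (β * p + p * laplace f₀ p)⁻¹ = p * laplace h p) :
    ∃ finf : ℝ, 0 ≤ finf ∧ Tendsto f₀ atTop (nhds finf) ∧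
      (0 < finf → Tendsto h atTop (nhds (1 / finf))) ∧
      (finf = 0 → Tendsto h atTop atTop) := by
  classical
  obtain ⟨c, b, g, hc, hb, hg, hrep⟩ := hB
  have hf0nn := DualityAux.licm_nonneg hf
  have hf0anti := DualityAux.licm_antitone hf
  have hfmeas : AEStronglyMeasurable f₀ (volume.restrict (Ioi 0)) :=
    (aemeasurable_restrict_of_antitoneOn measurableSet_Ioi hf0anti).aestronglyMeasurable
  obtain ⟨finf, hfinf0, hflim, hfle⟩ := DualityAux.antitone_tendsto hf0nn hf0anti
  obtain ⟨t₀, ht₀, hft₀⟩ := hne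
  have hft₀' : 0 < f₀ t₀ := lt_of_le_of_ne (hf0nn t₀ ht₀) (Ne.symm hft₀)
  -- Abelian limit for f₀
  have T1 : Tendsto (fun p => p * laplace f₀ p) (nhdsWithin 0 (Ioi 0)) (nhds finf) := by
    have habl := DualityAux.abelian (φ := f₀) (M := finf) (fun u => Real.exp (-1*u) * f₀ u)
      ?_ (DualityAux.laplace_integrand_integrable hfmeas hf0nn hf0anti hf.2 one_pos) ?_ hflim
    · apply habl.congr'
      filter_upwards [self_mem_nhdsWithin] with p hp
      exact (DualityAux.laplace_scaled f₀ hp).symm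
    · intro p hp
      have hp0 : (0:ℝ) < p := hp.1
      have hanti2 : AntitoneOn (fun u => f₀ (u/p)) (Ioi 0) := by
        intro x hx y hy hxy
        exact hf0anti (div_pos hx hp0) (div_pos hy hp0) (by gcongr)
      exact ((Real.continuous_exp.comp continuous_neg).aestronglyMeasurable.mono_measure
        Measure.restrict_le_self).mul
        ((aemeasurable_restrict_of_antitoneOn measurableSet_Ioi hanti2).aestronglyMeasurable)
    · intro p hp u hu
      have hp0 : (0:ℝ) < p := hp.1
      have hup : 0 < u/p := div_pos hu hp0
      have h1 : f₀ (u/p) ≤ f₀ u := by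
        apply hf0anti hu hup
        rw [le_div_iff₀ hp0]
        nlinarith [mul_le_mul_of_nonneg_left hp.2.le (le_of_lt (show (0:ℝ) < u from hu))]
      rw [Real.norm_eq_abs, abs_mul, abs_of_nonneg (Real.exp_pos _).le,
        abs_of_nonneg (hf0nn _ hup)]
      show Real.exp (-u) * f₀ (u/p) ≤ Real.exp (-1*u) * f₀ u
      rw [show (-1:ℝ)*u = -u by ring]
      exact mul_le_mul_of_nonneg_left h1 (Real.exp_pos _).le
  have Dpos : ∀ p : ℝ, 0 < p → 0 < β * p + p * laplace f₀ p := by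
    intro p hp
    have h1 := DualityAux.laplace_pos hfmeas hf0nn hf0anti hf.2 ht₀ hft₀' hp
    have h2 : 0 ≤ β * p := mul_nonneg hβ hp.le
    nlinarith
  have TD : Tendsto (fun p => β * p + p * laplace f₀ p) (nhdsWithin 0 (Ioi 0)) (nhds finf) := by
    have h1 : Tendsto (fun p : ℝ => β * p) (nhdsWithin 0 (Ioi 0)) (nhds 0) := by
      have h0 : Tendsto (fun p : ℝ => β * p) (nhds 0) (nhds (β * 0)) :=
        (continuous_const.mul continuous_id).tendsto 0
      rw [mul_zero] at h0
      exact h0.mono_left nhdsWithin_le_nhds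
    have := h1.add T1
    simpa using this
  -- Bernstein function facts
  have hgnn := DualityAux.licm_nonneg hg
  have hganti := DualityAux.licm_antitone hg
  have gInt : ∀ T : ℝ, IntegrableOn g (Ioo 0 T) := by
    intro T
    rcases le_or_gt T 1 with hT | hT
    · exact hg.2.mono_set (Ioo_subset_Ioo le_rfl hT)
    · have hsub : Ioo (0:ℝ) T ⊆ Ioo 0 1 ∪ Icc 1 T := by
        intro x hx
        rcases lt_or_ge x 1 with hx1 | hx1
        · exact Or.inl ⟨hx.1, hx1⟩
        · exact Or.inr ⟨hx1, hx.2.le⟩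
      refine (IntegrableOn.union hg.2 ?_).mono_set hsub
      apply ContinuousOn.integrableOn_Icc
      exact hg.1.1.continuousOn.mono (fun x hx => lt_of_lt_of_le one_pos hx.1)
  have hIntNonneg : ∀ T : ℝ, (0:ℝ) ≤ ∫ s in Ioo 0 T, g s := fun T =>
    setIntegral_nonneg measurableSet_Ioo (fun x hx => hgnn x hx.1)
  have hmono : MonotoneOn h (Ici 0) := by
    intro s hs t ht hst
    rw [hrep s hs, hrep t ht]
    have h1 : (∫ x in Ioo 0 s, g x) ≤ ∫ x in Ioo 0 t, g x := by
      apply setIntegral_mono_set (gInt t)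
      · filter_upwards [ae_restrict_mem measurableSet_Ioo] with x hx
        exact hgnn x hx.1
      · exact HasSubset.Subset.eventuallyLE (Ioo_subset_Ioo le_rfl hst)
    have h2 : b * s ≤ b * t := mul_le_mul_of_nonneg_left hst hb
    linarith
  have hnn : ∀ t ∈ Ici (0:ℝ), 0 ≤ h t := by
    intro t ht
    rw [hrep t ht]
    have h1 := hIntNonneg t
    have h2 : 0 ≤ b * t := mul_nonneg hb ht
    linarith
  have hg1 : 0 ≤ g 1 := hgnn 1 (by norm_num)
  set A := c + ∫ x in Ioo (0:ℝ) 1, g x with hAdef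
  set B0 := b + g 1 with hB0def
  have hgrow : ∀ t ≥ (0:ℝ), h t ≤ A + B0 * t := by
    intro t ht
    rw [hrep t ht]
    rcases le_or_gt t 1 with ht1 | ht1
    · have h1 : (∫ x in Ioo 0 t, g x) ≤ ∫ x in Ioo (0:ℝ) 1, g x := by
        apply setIntegral_mono_set hg.2
        · filter_upwards [ae_restrict_mem measurableSet_Ioo] with x hx
          exact hgnn x hx.1
        · exact HasSubset.Subset.eventuallyLE (Ioo_subset_Ioo le_rfl ht1)
      have h2 : 0 ≤ g 1 * t := mul_nonneg hg1 ht
      rw [hAdef, hB0def]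
      linarith
    · have intIco : IntegrableOn g (Ico 1 t) := by
        apply (gInt t).mono_set
        intro x hx
        exact ⟨lt_of_lt_of_le one_pos hx.1, hx.2⟩
      have hdisj : Disjoint (Ioo (0:ℝ) 1) (Ico 1 t) := by
        rw [Set.disjoint_left]
        rintro x ⟨_, h1⟩ ⟨h2, _⟩
        linarith
      have hsplit : (∫ x in Ioo 0 t, g x) = (∫ x in Ioo (0:ℝ) 1, g x) + ∫ x in Ico 1 t, g x := by
        have hu := setIntegral_union hdisj measurableSet_Ico hg.2 intIco (f := g) (μ := volume)
        rwa [Ioo_union_Ico_eq_Ioo one_pos ht1.le] at hu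
      have h2 : (∫ x in Ico 1 t, g x) ≤ g 1 * (t - 1) := by
        have h3 : (∫ x in Ico 1 t, g x) ≤ ∫ _x in Ico (1:ℝ) t, g 1 := by
          apply setIntegral_mono_on intIco
            (integrableOn_const (by rw [Real.volume_Ico]; exact ENNReal.ofReal_ne_top))
            measurableSet_Ico
          intro x hx
          exact hganti (by norm_num) (lt_of_lt_of_le one_pos hx.1) hx.1
        rwa [setIntegral_const, measureReal_def, Real.volume_Ico, ENNReal.toReal_ofReal (by linarith),
          smul_eq_mul, mul_comm] at h3
      rw [hsplit, hAdef, hB0def]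
      nlinarith [hg1]
  have hA : 0 ≤ A := by rw [hAdef]; have := hIntNonneg 1; linarith
  have hhmeas : AEStronglyMeasurable h (volume.restrict (Ioi 0)) :=
    (aemeasurable_restrict_of_monotoneOn measurableSet_Ioi
      (hmono.mono Ioi_subset_Ici_self)).aestronglyMeasurable
  have hh_int : ∀ p : ℝ, 0 < p → IntegrableOn (fun t => Real.exp (-p*t) * h t) (Ioi 0) := by
    intro p hp
    apply Integrable.mono' (DualityAux.linear_exp_integrable (A := A) (B := B0) hp)
    · exact ((Real.continuous_exp.comp
        (continuous_const.mul continuous_id)).aestronglyMeasurable.mono_measure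
        Measure.restrict_le_self).mul hhmeas
    · filter_upwards [ae_restrict_mem measurableSet_Ioi] with t ht
      have h0 : 0 ≤ h t := hnn t (mem_Ici.2 (le_of_lt ht))
      have h1 : h t ≤ A + B0 * t := hgrow t (le_of_lt ht)
      rw [Real.norm_eq_abs, abs_mul, abs_of_nonneg h0, abs_of_nonneg (Real.exp_pos _).le]
      calc Real.exp (-p*t) * h t ≤ Real.exp (-p*t) * (A + B0*t) :=
            mul_le_mul_of_nonneg_left h1 (Real.exp_pos _).le
        _ = (A + B0*t) * Real.exp (-p*t) := by ring
  have hlow : ∀ p : ℝ, 0 < p → Real.exp (-1) * h (1/p) ≤ p * laplace h p := by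
    intro p hp
    have hip : (0:ℝ) < 1/p := by positivity
    have hconst_int : IntegrableOn (fun t => Real.exp (-p*t) * h (1/p)) (Ioi (1/p)) :=
      (exp_neg_integrableOn_Ioi _ hp).mul_const _
    have hstep1 : (∫ t in Ioi (1/p), Real.exp (-p*t) * h (1/p))
        ≤ ∫ t in Ioi (1/p), Real.exp (-p*t) * h t := by
      apply setIntegral_mono_on hconst_int
        ((hh_int p hp).mono_set (Ioi_subset_Ioi hip.le)) measurableSet_Ioi
      intro x hx
      have h1 : h (1/p) ≤ h x := hmono hip.le (le_trans hip.le (le_of_lt hx)) (le_of_lt hx)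
      exact mul_le_mul_of_nonneg_left h1 (Real.exp_pos _).le
    have hstep2 : (∫ t in Ioi (1/p), Real.exp (-p*t) * h t) ≤ laplace h p := by
      apply setIntegral_mono_set (hh_int p hp)
      · filter_upwards [ae_restrict_mem measurableSet_Ioi] with t ht
        exact mul_nonneg (Real.exp_pos _).le (hnn t (mem_Ici.2 (le_of_lt ht)))
      · exact HasSubset.Subset.eventuallyLE (Ioi_subset_Ioi hip.le)
    have hval : (∫ t in Ioi (1/p), Real.exp (-p*t) * h (1/p)) = h (1/p) * (Real.exp (-1) / p) := by
      rw [integral_mul_const, DualityAux.integral_exp_neg_mul_Ioi hp,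
        show p * (1/p) = 1 by field_simp]
      ring
    rw [hval] at hstep1
    have hfinal : h (1/p) * (Real.exp (-1)/p) ≤ laplace h p := le_trans hstep1 hstep2
    calc Real.exp (-1) * h (1/p) = p * (h (1/p) * (Real.exp (-1)/p)) := by
          field_simp
      _ ≤ p * laplace h p := mul_le_mul_of_nonneg_left hfinal hp.le
  have hdual' : ∀ᶠ p in nhdsWithin (0:ℝ) (Ioi 0),
      (β*p + p*laplace f₀ p)⁻¹ = p * laplace h p := by
    filter_upwards [self_mem_nhdsWithin] with p hp
    exact hdual p hp
  have habel : BddAbove (h '' Ici 0) →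
      Tendsto (fun p => p * laplace h p) (nhdsWithin 0 (Ioi 0)) (nhds (sSup (h '' Ici 0))) := by
    intro hbdd
    obtain ⟨hhtend, hhle⟩ := DualityAux.monotoneOn_tendsto hmono hbdd
    set M := sSup (h '' Ici 0) with hMdef
    have hM0 : 0 ≤ M := le_trans (hnn 0 (by norm_num)) (hhle 0 (by norm_num))
    have habl := DualityAux.abelian (φ := h) (M := M) (fun u => Real.exp (-1*u) * M)
      ?_ ((exp_neg_integrableOn_Ioi 0 one_pos).mul_const M) ?_ hhtend
    · apply habl.congr'
      filter_upwards [self_mem_nhdsWithin] with p hp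
      exact (DualityAux.laplace_scaled h hp).symm
    · intro p hp
      have hp0 : (0:ℝ) < p := hp.1
      have hmono2 : MonotoneOn (fun u => h (u/p)) (Ioi 0) := by
        intro x hx y hy hxy
        exact hmono (le_of_lt (div_pos hx hp0)) (le_of_lt (div_pos hy hp0)) (by gcongr)
      exact ((Real.continuous_exp.comp continuous_neg).aestronglyMeasurable.mono_measure
        Measure.restrict_le_self).mul
        ((aemeasurable_restrict_of_monotoneOn measurableSet_Ioi hmono2).aestronglyMeasurable)
    · intro p hp u hu
      have hp0 : (0:ℝ) < p := hp.1
      have hup : 0 < u/p := div_pos hu hp0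
      have h1 : h (u/p) ≤ M := hhle _ hup.le
      rw [Real.norm_eq_abs, abs_mul, abs_of_nonneg (Real.exp_pos _).le,
        abs_of_nonneg (hnn _ hup.le)]
      show Real.exp (-u) * h (u/p) ≤ Real.exp (-1*u) * M
      rw [show (-1:ℝ)*u = -u by ring]
      exact mul_le_mul_of_nonneg_left h1 (Real.exp_pos _).le
  have hLtopOfUnbdd : ¬BddAbove (h '' Ici 0) →
      Tendsto (fun p => p * laplace h p) (nhdsWithin 0 (Ioi 0)) atTop := by
    intro hub
    have hhtop := DualityAux.monotoneOn_tendsto_atTop hmono hub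
    have h1 : Tendsto (fun p : ℝ => h (1/p)) (nhdsWithin 0 (Ioi 0)) atTop := by
      apply hhtop.comp
      apply tendsto_inv_nhdsGT_zero.congr
      intro p
      rw [one_div]
    refine tendsto_atTop_mono' _ ?_ (Tendsto.const_mul_atTop (Real.exp_pos (-1)) h1)
    filter_upwards [self_mem_nhdsWithin] with p hp
    exact hlow p hp
  refine ⟨finf, hfinf0, hflim, ?_, ?_⟩
  · intro hfinfpos
    have TDinv : Tendsto (fun p => (β*p + p*laplace f₀ p)⁻¹) (nhdsWithin 0 (Ioi 0))
        (nhds finf⁻¹) := TD.inv₀ (ne_of_gt hfinfpos)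
    have TL : Tendsto (fun p => p * laplace h p) (nhdsWithin 0 (Ioi 0)) (nhds finf⁻¹) :=
      TDinv.congr' hdual'
    by_cases hbdd : BddAbove (h '' Ici 0)
    · have hM := tendsto_nhds_unique (habel hbdd) TL
      obtain ⟨hhtend, _⟩ := DualityAux.monotoneOn_tendsto hmono hbdd
      rw [hM] at hhtend
      rwa [one_div]
    · exact absurd TL (not_tendsto_nhds_of_tendsto_atTop (hLtopOfUnbdd hbdd) _)
  · intro hfinfz
    rw [hfinfz] at TD
    have TDpos : Tendsto (fun p => β*p + p*laplace f₀ p) (nhdsWithin 0 (Ioi 0))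
        (nhdsWithin 0 (Ioi 0)) := by
      rw [tendsto_nhdsWithin_iff]
      refine ⟨TD, ?_⟩
      filter_upwards [self_mem_nhdsWithin] with p hp
      exact Dpos p hp
    have TLtop : Tendsto (fun p => p * laplace h p) (nhdsWithin 0 (Ioi 0)) atTop :=
      Tendsto.congr' hdual' (tendsto_inv_nhdsGT_zero.comp TDpos)
    by_cases hbdd : BddAbove (h '' Ici 0)
    · exact absurd TLtop (not_tendsto_atTop_of_tendsto_nhds (habel hbdd))
    · exact DualityAux.monotoneOn_tendsto_atTop hmono hbdd
end
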